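/- Let D₈ be the convex octagon in ℝ² with vertices (−1,3), (1,3), (2,1), (2,−1), (1,−3), (−1,−3), (−2,−1), (−2,1), and let Λ be the lattice generated by the vectors u₁ = (2,0) and u₂ = (3/2, 2), i.e. Λ = {z₁u₁ + z₂u₂ : z₁, z₂ ∈ ℤ}. Then D₈ + Λ is a five-fold translative tiling of the plane: every point of ℝ² belongs to at least 5 of the translates D₈ + λ (λ ∈ Λ), and every point of ℝ² belongs to at most 5 of the translates int(D₈) + λ. -/

import Mathlib

open Pointwise

/-- `K + X` is a `k`-fold translative tiling of the plane: the translate multiset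
`(x i)` is discrete, every point of the plane belongs to at least `k` of the translates
`K + x i`, and every point belongs to at most `k` of the translates `interior K + x i`
(multiplicity counted over the index set). -/
def IsKFoldTranslativeTiling {ι : Type} (K : Set (ℝ × ℝ)) (x : ι → ℝ × ℝ) (k : ℕ) : Prop :=
  (∀ R : ℝ, {i : ι | ‖x i‖ ≤ R}.Finite) ∧
  (∀ p : ℝ × ℝ, ∃ s : Finset ι, k ≤ s.card ∧ ∀ i ∈ s, p - x i ∈ K) ∧
  (∀ p : ℝ × ℝ, ∀ s : Finset ι, (∀ i ∈ s, p - x i ∈ interior K) → s.card ≤ k)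

/-- `P` is a (two-dimensional) convex polygon whose vertex set is the finite set `V`:
`P` is the convex hull of `V`, every element of `V` is an extreme point of `P`
(so `V` is exactly the vertex set), and `P` has nonempty interior. -/
def IsConvexPolygon (P : Set (ℝ × ℝ)) (V : Finset (ℝ × ℝ)) : Prop :=
  P = convexHull ℝ (V : Set (ℝ × ℝ)) ∧
  (∀ v ∈ V, v ∈ Set.extremePoints ℝ P) ∧
  (interior P).Nonempty

/-- `P` is symmetric about some point `c`. -/
def IsCentrallySymmetric (P : Set (ℝ × ℝ)) : Prop :=
  ∃ c : ℝ × ℝ, ∀ p ∈ P, 2 • c - p ∈ P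

/-- The segment `[a, b]` is an edge of the convex polygon `P` with vertex set `V`. -/
def IsEdge (P : Set (ℝ × ℝ)) (V : Finset (ℝ × ℝ)) (a b : ℝ × ℝ) : Prop :=
  a ∈ V ∧ b ∈ V ∧ a ≠ b ∧ segment ℝ a b ⊆ frontier P

/-!
The octagon is the intersection of the four strips `|u| ≤ 2`, `|v| ≤ 3`, `|2u + v| ≤ 5`,
`|2u - v| ≤ 5`. Since the multiplicities are invariant under lattice translations and every
point has a lattice translate in the square `[0, 2]²`, it suffices to count there. The edges of
the translates cut that square into seven polygons; on each of them one explicit set of five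
lattice vectors `λ` has `p - λ` in the octagon, while every other `λ` puts `p - λ` outside one of
the open strips.
-/

section ExactCover

variable {ι E : Type*} [AddCommGroup E] [TopologicalSpace E]

def IsExactCoverAt (K : Set E) (x : ι → E) (k : ℕ) (p : E) : Prop :=
  ∃ s : Finset ι, s.card = k ∧ (∀ i ∈ s, p - x i ∈ K) ∧ ∀ i, p - x i ∈ interior K → i ∈ s

theorem IsExactCoverAt.add [AddGroup ι] {K : Set E} {x : ι → E}
    {k : ℕ} {p : E} (h : IsExactCoverAt K x k p) (hx : ∀ i j, x (i + j) = x i + x j) (g : ι) :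
    IsExactCoverAt K x k (p + x g) := by
  obtain ⟨s, hcard, hmem, hint⟩ := h
  refine ⟨s.map (addRightEmbedding g), by rw [Finset.card_map, hcard], ?_, fun i hi => ?_⟩
  · simpa [hx] using hmem
  · have hsub : p + x g - x i = p - x (i - g) := by
      rw [← sub_add_cancel i g, hx, add_sub_cancel_right]; abel
    exact Finset.mem_map.2 ⟨i - g, hint _ (hsub ▸ hi), sub_add_cancel i g⟩

end ExactCover

theorem isKFoldTranslativeTiling_of_isExactCoverAt {ι : Type} {K : Set (ℝ × ℝ)}
    {x : ι → ℝ × ℝ} {k : ℕ} (hdisc : ∀ R : ℝ, {i : ι | ‖x i‖ ≤ R}.Finite)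
    (hcover : ∀ p, IsExactCoverAt K x k p) : IsKFoldTranslativeTiling K x k := by
  refine ⟨hdisc, fun p => ?_, fun p t ht => ?_⟩ <;> obtain ⟨s, hcard, hmem, hint⟩ := hcover p
  · exact ⟨s, hcard.ge, hmem⟩
  · exact hcard ▸ Finset.card_le_card fun i hi => hint i (ht i hi)

theorem exists_one_lt_smul_mem_of_mem_interior {E : Type*} [AddCommGroup E] [TopologicalSpace E]
    [Module ℝ E] [ContinuousSMul ℝ E] {s : Set E} {p : E} (hp : p ∈ interior s) :
    ∃ t : ℝ, 1 < t ∧ t • p ∈ s := by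
  have hev : ∀ᶠ t : ℝ in nhds 1, t • p ∈ s :=
    (continuous_id.smul continuous_const).continuousAt.preimage_mem_nhds
      (by simpa using mem_interior_iff_mem_nhds.1 hp)
  obtain ⟨t, hts, ht⟩ :=
    ((hev.filter_mono (nhdsWithin_le_nhds (s := Set.Ioi 1))).and self_mem_nhdsWithin).exists
  exact ⟨t, ht, hts⟩

theorem abs_lt_of_mem_interior {E : Type*} [AddCommGroup E] [TopologicalSpace E]
    [Module ℝ E] [ContinuousSMul ℝ E] {s : Set E} {p : E} (f : E →ₗ[ℝ] ℝ) {c : ℝ} (hc : 0 < c)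
    (hs : ∀ q ∈ s, |f q| ≤ c) (hp : p ∈ interior s) : |f p| < c := by
  obtain ⟨t, ht, hts⟩ := exists_one_lt_smul_mem_of_mem_interior hp
  have hft := hs _ hts
  rw [map_smul, smul_eq_mul, abs_mul, abs_of_pos (by linarith)] at hft
  nlinarith [abs_nonneg (f p)]

theorem convex_setOf_abs_le {E : Type*} [AddCommGroup E] [Module ℝ E] (f : E →ₗ[ℝ] ℝ) (c : ℝ) :
    Convex ℝ {p | |f p| ≤ c} := by
  simpa only [Set.preimage, Set.mem_Icc, ← abs_le] using (convex_Icc (-c) c).linear_preimage f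

theorem Convex.mk_mem_of_mem_Icc {E : Type*} [AddCommGroup E] [Module ℝ E] {C : Set (E × ℝ)}
    (hC : Convex ℝ C) {u : E} {a b v : ℝ} (ha : (u, a) ∈ C) (hb : (u, b) ∈ C)
    (hv : v ∈ Set.Icc a b) : (u, v) ∈ C :=
  hC.segment_subset ha hb <| by
    rw [← Prod.image_mk_segment_right, segment_eq_Icc (hv.1.trans hv.2)]
    exact ⟨v, hv, rfl⟩

def octagonVertices : Set (ℝ × ℝ) :=
  {(-1, 3), (1, 3), (2, 1), (2, -1), (1, -3), (-1, -3), (-2, -1), (-2, 1)}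

def octagon : Set (ℝ × ℝ) :=
  {p | |p.1| ≤ 2 ∧ |p.2| ≤ 3 ∧ |2 * p.1 + p.2| ≤ 5 ∧ |2 * p.1 - p.2| ≤ 5}

theorem convex_octagon : Convex ℝ octagon :=
  (convex_setOf_abs_le (LinearMap.fst ℝ ℝ ℝ) 2).inter <|
    (convex_setOf_abs_le (LinearMap.snd ℝ ℝ ℝ) 3).inter <|
      (convex_setOf_abs_le ((2 : ℝ) • LinearMap.fst ℝ ℝ ℝ + LinearMap.snd ℝ ℝ ℝ) 5).inter
        (convex_setOf_abs_le ((2 : ℝ) • LinearMap.fst ℝ ℝ ℝ - LinearMap.snd ℝ ℝ ℝ) 5)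

theorem abs_lt_of_mem_interior_octagon {p : ℝ × ℝ} (hp : p ∈ interior octagon) :
    |p.1| < 2 ∧ |p.2| < 3 ∧ |2 * p.1 + p.2| < 5 ∧ |2 * p.1 - p.2| < 5 :=
  ⟨abs_lt_of_mem_interior (LinearMap.fst ℝ ℝ ℝ) two_pos (fun _ hq => hq.1) hp,
    abs_lt_of_mem_interior (LinearMap.snd ℝ ℝ ℝ) three_pos (fun _ hq => hq.2.1) hp,
    abs_lt_of_mem_interior ((2 : ℝ) • LinearMap.fst ℝ ℝ ℝ + LinearMap.snd ℝ ℝ ℝ) (by norm_num)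
      (fun _ hq => hq.2.2.1) hp,
    abs_lt_of_mem_interior ((2 : ℝ) • LinearMap.fst ℝ ℝ ℝ - LinearMap.snd ℝ ℝ ℝ) (by norm_num)
      (fun _ hq => hq.2.2.2) hp⟩

theorem convexHull_octagonVertices_subset : convexHull ℝ octagonVertices ⊆ octagon :=
  convexHull_min (by simp [octagonVertices, Set.insert_subset_iff, octagon, abs_le]; norm_num)
    convex_octagon

theorem lineMap_mem_convexHull_octagonVertices (a b : ℝ × ℝ) {q : ℝ × ℝ} (t : ℝ)
    (ht₀ : 0 ≤ t) (ht₁ : t ≤ 1) (hq : q = AffineMap.lineMap a b t)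
    (ha : a ∈ octagonVertices := by simp [octagonVertices])
    (hb : b ∈ octagonVertices := by simp [octagonVertices]) :
    q ∈ convexHull ℝ octagonVertices :=
  hq ▸ (convex_convexHull ℝ _).lineMap_mem (subset_convexHull ℝ _ ha) (subset_convexHull ℝ _ hb)
    ⟨ht₀, ht₁⟩

theorem octagon_subset_convexHull : octagon ⊆ convexHull ℝ octagonVertices := by
  rintro ⟨u, v⟩ ⟨hu, hv, hpos, hneg⟩
  simp only [abs_le] at hu hv hpos hneg
  have hC := convex_convexHull ℝ octagonVertices
  -- the vertical chord through `(u, v)` ends on two edges of the octagon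
  rcases le_total u (-1) with hu₁ | hu₁
  · refine hC.mk_mem_of_mem_Icc (a := -5 - 2 * u) (b := 5 + 2 * u)
      (lineMap_mem_convexHull_octagonVertices (-2, -1) (-1, -3) (u + 2) ?_ ?_ ?_)
      (lineMap_mem_convexHull_octagonVertices (-2, 1) (-1, 3) (u + 2) ?_ ?_ ?_) ⟨?_, ?_⟩ <;>
    first | linarith | (ext <;> simp [AffineMap.lineMap_apply_module] <;> ring)
  rcases le_total u 1 with hu₂ | hu₂
  · refine hC.mk_mem_of_mem_Icc (a := -3) (b := 3)
      (lineMap_mem_convexHull_octagonVertices (-1, -3) (1, -3) ((u + 1) / 2) ?_ ?_ ?_)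
      (lineMap_mem_convexHull_octagonVertices (-1, 3) (1, 3) ((u + 1) / 2) ?_ ?_ ?_) ⟨?_, ?_⟩ <;>
    first | linarith | (ext <;> simp [AffineMap.lineMap_apply_module] <;> ring)
  · refine hC.mk_mem_of_mem_Icc (a := 2 * u - 5) (b := 5 - 2 * u)
      (lineMap_mem_convexHull_octagonVertices (1, -3) (2, -1) (u - 1) ?_ ?_ ?_)
      (lineMap_mem_convexHull_octagonVertices (1, 3) (2, 1) (u - 1) ?_ ?_ ?_) ⟨?_, ?_⟩ <;>
    first | linarith | (ext <;> simp [AffineMap.lineMap_apply_module] <;> ring)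

theorem convexHull_octagonVertices : convexHull ℝ octagonVertices = octagon :=
  convexHull_octagonVertices_subset.antisymm octagon_subset_convexHull

noncomputable def latticePoint (z : ℤ × ℤ) : ℝ × ℝ :=
  (z.1 : ℝ) • (((2 : ℝ), (0 : ℝ)) : ℝ × ℝ) + (z.2 : ℝ) • (((3 / 2 : ℝ), (2 : ℝ)) : ℝ × ℝ)

theorem latticePoint_apply (z : ℤ × ℤ) :
    latticePoint z = (2 * (z.1 : ℝ) + 3 / 2 * z.2, 2 * (z.2 : ℝ)) := by
  ext <;> simp [latticePoint] <;> ring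

theorem latticePoint_add (i j : ℤ × ℤ) :
    latticePoint (i + j) = latticePoint i + latticePoint j := by
  simp only [latticePoint, Prod.fst_add, Prod.snd_add, Int.cast_add, add_smul]
  abel

theorem finite_setOf_norm_latticePoint_le (R : ℝ) : {z | ‖latticePoint z‖ ≤ R}.Finite := by
  refine (Set.finite_Icc (-⌈R⌉, -⌈R⌉) (⌈R⌉, ⌈R⌉)).subset fun z hz => ?_
  rw [Set.mem_ofPred_eq, latticePoint_apply, Prod.norm_mk, max_le_iff, Real.norm_eq_abs,
    Real.norm_eq_abs, abs_le, abs_le] at hz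
  have hR := Int.le_ceil R
  refine ⟨⟨?_, ?_⟩, ?_, ?_⟩ <;> refine (Int.cast_le (R := ℝ)).1 ?_ <;> push_cast <;> linarith

theorem exists_latticePoint_add (p : ℝ × ℝ) : ∃ (z : ℤ × ℤ) (x y : ℝ),
    x ∈ Set.Icc (0 : ℝ) 2 ∧ y ∈ Set.Icc (0 : ℝ) 2 ∧ p = (x, y) + latticePoint z := by
  obtain ⟨b, hb, hb'⟩ : ∃ b : ℤ, (b : ℝ) ≤ p.2 / 2 ∧ p.2 / 2 < b + 1 :=
    ⟨_, Int.floor_le _, Int.lt_floor_add_one _⟩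
  obtain ⟨a, ha, ha'⟩ : ∃ a : ℤ, (a : ℝ) ≤ (p.1 - 3 / 2 * b) / 2 ∧ (p.1 - 3 / 2 * b) / 2 < a + 1 :=
    ⟨_, Int.floor_le _, Int.lt_floor_add_one _⟩
  refine ⟨(a, b), p.1 - 2 * a - 3 / 2 * b, p.2 - 2 * b, ⟨?_, ?_⟩, ⟨?_, ?_⟩, ?_⟩
  any_goals linarith
  rw [latticePoint_apply]
  ext <;> simp

noncomputable def cellWitness (x y : ℝ) : Finset (ℤ × ℤ) :=
  if y ≤ 1 then
    if 2 * x - y ≤ 2 then {(-1, 1), (0, 0), (0, 1), (1, -1), (1, 0)}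
    else if 2 * x + y ≤ 4 then {(0, 0), (0, 1), (1, -1), (1, 0), (2, -1)}
    else {(0, 0), (0, 1), (1, 0), (1, 1), (2, -1)}
  else
    if 2 * x - y ≤ -1 then {(-2, 2), (-1, 1), (-1, 2), (0, 0), (0, 1)}
    else if x ≤ 3 / 2 then {(-1, 1), (-1, 2), (0, 0), (0, 1), (1, 0)}
    else if 2 * x + y ≤ 5 then {(-1, 2), (0, 0), (0, 1), (1, 0), (1, 1)}
    else {(-1, 2), (0, 1), (0, 2), (1, 0), (1, 1)}

theorem card_cellWitness (x y : ℝ) : (cellWitness x y).card = 5 := by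
  unfold cellWitness
  split_ifs <;> rfl

theorem sub_latticePoint_mem_octagon {x y : ℝ} (hx : x ∈ Set.Icc (0 : ℝ) 2)
    (hy : y ∈ Set.Icc (0 : ℝ) 2) {z : ℤ × ℤ} (hz : z ∈ cellWitness x y) :
    (x, y) - latticePoint z ∈ octagon := by
  obtain ⟨hx₀, hx₂⟩ := hx
  obtain ⟨hy₀, hy₂⟩ := hy
  simp only [octagon, latticePoint_apply, Set.mem_ofPred_eq, Prod.fst_sub, Prod.snd_sub, abs_le]
  unfold cellWitness at hz
  split_ifs at hz <;> simp only [Finset.mem_insert, Finset.mem_singleton] at hz <;>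
    rcases hz with rfl | rfl | rfl | rfl | rfl <;> norm_num <;>
    refine ⟨⟨?_, ?_⟩, ⟨?_, ?_⟩, ⟨?_, ?_⟩, ?_, ?_⟩ <;> linarith

theorem mem_cellWitness_of_mem_interior {x y : ℝ} (hx : x ∈ Set.Icc (0 : ℝ) 2)
    (hy : y ∈ Set.Icc (0 : ℝ) 2) {z : ℤ × ℤ} (hz : (x, y) - latticePoint z ∈ interior octagon) :
    z ∈ cellWitness x y := by
  obtain ⟨hx₀, hx₂⟩ := hx
  obtain ⟨hy₀, hy₂⟩ := hy
  obtain ⟨a, b⟩ := z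
  obtain ⟨h₁, h₂, h₃, h₄⟩ := abs_lt_of_mem_interior_octagon hz
  clear hz
  simp only [latticePoint_apply, Prod.fst_sub, Prod.snd_sub, abs_lt] at h₁ h₂ h₃ h₄
  -- only the 20 vectors with `-2 ≤ a ≤ 2`, `-1 ≤ b ≤ 2` can put `(x, y) - λ` in the open strips
  have hb₁ : (-2 : ℤ) < b := by exact_mod_cast (show (-2 : ℝ) < b by linarith)
  have hb₂ : b < (3 : ℤ) := by exact_mod_cast (show (b : ℝ) < 3 by linarith)
  have hb₃ : (-1 : ℝ) ≤ b := by exact_mod_cast (show (-1 : ℤ) ≤ b by omega)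
  have hb₄ : (b : ℝ) ≤ 2 := by exact_mod_cast (show b ≤ (2 : ℤ) by omega)
  have ha₁ : (-3 : ℤ) < a := by exact_mod_cast (show (-3 : ℝ) < a by linarith)
  have ha₂ : a < (3 : ℤ) := by exact_mod_cast (show (a : ℝ) < 3 by linarith)
  unfold cellWitness
  interval_cases a <;> interval_cases b <;> push_cast at h₁ h₂ h₃ h₄ <;> split_ifs <;>
    first | decide | linarith

theorem isExactCoverAt_octagon_of_mem_cell {x y : ℝ} (hx : x ∈ Set.Icc (0 : ℝ) 2)
    (hy : y ∈ Set.Icc (0 : ℝ) 2) : IsExactCoverAt octagon latticePoint 5 (x, y) :=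
  ⟨cellWitness x y, card_cellWitness x y, fun _ => sub_latticePoint_mem_octagon hx hy,
    fun _ => mem_cellWitness_of_mem_interior hx hy⟩

/-- Let `D₈` be the octagon with vertices `(±1, ±3)`, `(±2, ±1)` and let `Λ` be the
lattice generated by `u₁ = (2,0)` and `u₂ = (3/2, 2)`. Then `D₈ + Λ` is a five-fold
translative tiling of the plane. -/
theorem octagon_fivefold_lattice_tiling :
    IsKFoldTranslativeTiling
      (convexHull ℝ ({((-1 : ℝ), (3 : ℝ)), (1, 3), (2, 1), (2, -1),
        (1, -3), (-1, -3), (-2, -1), (-2, 1)} : Set (ℝ × ℝ)))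
      (fun z : ℤ × ℤ =>
        (z.1 : ℝ) • (((2 : ℝ), (0 : ℝ)) : ℝ × ℝ) +
        (z.2 : ℝ) • (((3 / 2 : ℝ), (2 : ℝ)) : ℝ × ℝ)) 5 := by
  change IsKFoldTranslativeTiling (convexHull ℝ octagonVertices) latticePoint 5
  rw [convexHull_octagonVertices]
  refine isKFoldTranslativeTiling_of_isExactCoverAt finite_setOf_norm_latticePoint_le fun p => ?_
  obtain ⟨z, x, y, hx, hy, rfl⟩ := exists_latticePoint_add p
  exact (isExactCoverAt_octagon_of_mem_cell hx hy).add latticePoint_add z
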